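/- arXiv:1401.0742 — 4 statements merged into one kernel-verified Lean document; each statement's English description precedes it below -/
import Mathlib

section
/- Every element of 𝒫⁺ has an inverse under ⊕: for p ∈ 𝒫⁺, define −p by (−p)(λ) = 1 and (−p)(xτ)/(−p)(x) = p(xτ)^{-1} / Σ_{α∈Σ} p(xα)^{-1}. Then p ⊕ (−p) = i∘, the flat white noise measure with i∘(x) = |Σ|^{-|x|}. -/
open Finset

def IsPPlus {A : Type*} [Fintype A] (p : List A → ℝ) : Prop :=
  p [] = 1 ∧ (∀ x, 0 < p x) ∧ (∀ x : List A, ∑ τ : A, p (τ :: x) = p x)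

noncomputable def oplus {A : Type*} [Fintype A] (p₁ p₂ : List A → ℝ) : List A → ℝ
  | [] => 1
  | (τ :: x) => oplus p₁ p₂ x *
      (p₁ (τ :: x) * p₂ (τ :: x) / ∑ α : A, p₁ (α :: x) * p₂ (α :: x))

noncomputable def iO (A : Type*) [Fintype A] : List A → ℝ :=
  fun x => ((Fintype.card A : ℝ))⁻¹ ^ x.length

/-- The inverse `−p`, defined by `(−p)(λ)=1` and
`(−p)(xτ)/(−p)(x) = p(xτ)⁻¹ / ∑_α p(xα)⁻¹`. -/
noncomputable def oneg {A : Type*} [Fintype A] (p : List A → ℝ) : List A → ℝ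
  | [] => 1
  | (τ :: x) => oneg p x * ((p (τ :: x))⁻¹ / ∑ α : A, (p (α :: x))⁻¹)

lemma oneg_pos {A : Type*} [Fintype A] [Nonempty A] (p : List A → ℝ)
    (hp : ∀ x, 0 < p x) : ∀ x, 0 < oneg p x := by
  intro x
  induction x with
  | nil => simp [oneg]
  | cons τ x ih =>
    have hS : 0 < ∑ α : A, (p (α :: x))⁻¹ :=
      Finset.sum_pos (fun α _ => inv_pos.2 (hp _)) univ_nonempty
    exact mul_pos ih (div_pos (inv_pos.2 (hp _)) hS)

/-- every `p ∈ 𝒫⁺` has `−p` as an ⊕-inverse: `p ⊕ (−p) = i∘`. -/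
theorem oplus_inverse {A : Type*} [Fintype A] [Nonempty A]
    (p : List A → ℝ) (hp : IsPPlus p) :
    oplus p (oneg p) = iO A := by
  obtain ⟨h0, hpos, hsum⟩ := hp
  funext x
  induction x with
  | nil => simp [oplus, iO]
  | cons τ x ih =>
    have hS : 0 < ∑ α : A, (p (α :: x))⁻¹ :=
      Finset.sum_pos (fun α _ => inv_pos.2 (hpos _)) univ_nonempty
    have hn := oneg_pos p hpos x
    have key : ∀ α : A, p (α :: x) * oneg p (α :: x)
        = oneg p x / ∑ β : A, (p (β :: x))⁻¹ := by
      intro α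
      simp only [oneg]
      field_simp
      rw [div_mul_eq_div_div, div_self (hpos (α :: x)).ne']
    have hsum2 : ∑ α : A, p (α :: x) * oneg p (α :: x)
        = (Fintype.card A : ℝ) * (oneg p x / ∑ β : A, (p (β :: x))⁻¹) := by
      simp [key, Finset.sum_const, card_univ, nsmul_eq_mul]
    have hcard : (0:ℝ) < (Fintype.card A : ℝ) := by
      exact_mod_cast Fintype.card_pos
    have hne : oneg p x / ∑ β : A, (p (β :: x))⁻¹ ≠ 0 := by positivity
    simp only [oplus, ih, hsum2, key τ, iO, List.length_cons, pow_succ]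
    rw [mul_comm ((Fintype.card A : ℝ)), div_mul_eq_div_div, div_self hne, one_div]
end

section
/- (𝒫⁺, ⊕) is an Abelian group with identity i∘(x) = |Σ|^{-|x|} and inverse −p given by (−p)(xτ)/(−p)(x) = p(xτ)^{-1}/Σ_{α} p(xα)^{-1}. -/
open Finset

section Aux

variable {A : Type*} [Fintype A] [Nonempty A]

lemma sum2_pos (p₁ p₂ : List A → ℝ) (h₁ : ∀ x, 0 < p₁ x) (h₂ : ∀ x, 0 < p₂ x)
    (x : List A) : 0 < ∑ α : A, p₁ (α :: x) * p₂ (α :: x) :=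
  Finset.sum_pos (fun α _ => mul_pos (h₁ _) (h₂ _)) univ_nonempty

lemma oplus_pos (p₁ p₂ : List A → ℝ) (h₁ : ∀ x, 0 < p₁ x) (h₂ : ∀ x, 0 < p₂ x) :
    ∀ x, 0 < oplus p₁ p₂ x := by
  intro x
  induction x with
  | nil => simp [oplus]
  | cons τ x ih =>
    exact mul_pos ih (div_pos (mul_pos (h₁ _) (h₂ _)) (sum2_pos p₁ p₂ h₁ h₂ x))

noncomputable def triple (p₁ p₂ p₃ : List A → ℝ) : List A → ℝ
  | [] => 1
  | (τ :: x) => triple p₁ p₂ p₃ x *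
      (p₁ (τ :: x) * p₂ (τ :: x) * p₃ (τ :: x) /
        ∑ α : A, p₁ (α :: x) * p₂ (α :: x) * p₃ (α :: x))

lemma sum3_pos (p₁ p₂ p₃ : List A → ℝ) (h₁ : ∀ x, 0 < p₁ x) (h₂ : ∀ x, 0 < p₂ x)
    (h₃ : ∀ x, 0 < p₃ x) (x : List A) :
    0 < ∑ α : A, p₁ (α :: x) * p₂ (α :: x) * p₃ (α :: x) :=
  Finset.sum_pos (fun α _ => mul_pos (mul_pos (h₁ _) (h₂ _)) (h₃ _)) univ_nonempty

lemma oplus_oplus_left (p₁ p₂ p₃ : List A → ℝ) (h₁ : ∀ x, 0 < p₁ x)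
    (h₂ : ∀ x, 0 < p₂ x) (h₃ : ∀ x, 0 < p₃ x) :
    oplus (oplus p₁ p₂) p₃ = triple p₁ p₂ p₃ := by
  funext x
  induction x with
  | nil => simp [oplus, triple]
  | cons τ x ih =>
    have hq : oplus p₁ p₂ x ≠ 0 := (oplus_pos p₁ p₂ h₁ h₂ x).ne'
    have hD : (∑ α : A, p₁ (α :: x) * p₂ (α :: x)) ≠ 0 := (sum2_pos p₁ p₂ h₁ h₂ x).ne'
    have hE : (∑ α : A, p₁ (α :: x) * p₂ (α :: x) * p₃ (α :: x)) ≠ 0 :=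
      (sum3_pos p₁ p₂ p₃ h₁ h₂ h₃ x).ne'
    simp only [oplus, triple, ih]
    congr 1
    have hsum : (∑ α : A, oplus p₁ p₂ x *
          (p₁ (α :: x) * p₂ (α :: x) / ∑ β : A, p₁ (β :: x) * p₂ (β :: x)) * p₃ (α :: x))
        = oplus p₁ p₂ x / (∑ α : A, p₁ (α :: x) * p₂ (α :: x)) *
          ∑ α : A, p₁ (α :: x) * p₂ (α :: x) * p₃ (α :: x) := by
      rw [Finset.mul_sum]
      exact Finset.sum_congr rfl fun α _ => by ring
    rw [hsum]
    field_simp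

lemma oplus_oplus_right (p₁ p₂ p₃ : List A → ℝ) (h₁ : ∀ x, 0 < p₁ x)
    (h₂ : ∀ x, 0 < p₂ x) (h₃ : ∀ x, 0 < p₃ x) :
    oplus p₁ (oplus p₂ p₃) = triple p₁ p₂ p₃ := by
  funext x
  induction x with
  | nil => simp [oplus, triple]
  | cons τ x ih =>
    have hq : oplus p₂ p₃ x ≠ 0 := (oplus_pos p₂ p₃ h₂ h₃ x).ne'
    have hD : (∑ α : A, p₂ (α :: x) * p₃ (α :: x)) ≠ 0 := (sum2_pos p₂ p₃ h₂ h₃ x).ne'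
    have hE : (∑ α : A, p₁ (α :: x) * p₂ (α :: x) * p₃ (α :: x)) ≠ 0 :=
      (sum3_pos p₁ p₂ p₃ h₁ h₂ h₃ x).ne'
    simp only [oplus, triple, ih]
    congr 1
    have hsum : (∑ α : A, p₁ (α :: x) * (oplus p₂ p₃ x *
          (p₂ (α :: x) * p₃ (α :: x) / ∑ β : A, p₂ (β :: x) * p₃ (β :: x))))
        = oplus p₂ p₃ x / (∑ α : A, p₂ (α :: x) * p₃ (α :: x)) *
          ∑ α : A, p₁ (α :: x) * p₂ (α :: x) * p₃ (α :: x) := by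
      rw [Finset.mul_sum]
      exact Finset.sum_congr rfl fun α _ => by ring
    rw [hsum]
    field_simp

lemma card_pos' : (0 : ℝ) < (Fintype.card A : ℝ) := by
  exact_mod_cast Fintype.card_pos

end Aux

/-- `(𝒫⁺, ⊕)` is an Abelian group with identity `i∘` and
inverse `−p`: closure, commutativity, associativity, identity and inverses. -/
theorem oplus_abelian_group {A : Type*} [Fintype A] [Nonempty A] :
    (∀ p₁ p₂ : List A → ℝ, IsPPlus p₁ → IsPPlus p₂ → IsPPlus (oplus p₁ p₂)) ∧
    (∀ p₁ p₂ : List A → ℝ, IsPPlus p₁ → IsPPlus p₂ → oplus p₁ p₂ = oplus p₂ p₁) ∧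
    (∀ p₁ p₂ p₃ : List A → ℝ, IsPPlus p₁ → IsPPlus p₂ → IsPPlus p₃ →
      oplus (oplus p₁ p₂) p₃ = oplus p₁ (oplus p₂ p₃)) ∧
    IsPPlus (iO A) ∧
    (∀ p : List A → ℝ, IsPPlus p → oplus p (iO A) = p ∧ oplus (iO A) p = p) ∧
    (∀ p : List A → ℝ, IsPPlus p → IsPPlus (oneg p) ∧ oplus p (oneg p) = iO A) := by
  have hcard : (0 : ℝ) < (Fintype.card A : ℝ) := by exact_mod_cast Fintype.card_pos
  refine ⟨?_, ?_, ?_, ?_, ?_, ?_⟩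
  · -- closure
    rintro p₁ p₂ ⟨-, h₁, -⟩ ⟨-, h₂, -⟩
    refine ⟨rfl, oplus_pos p₁ p₂ h₁ h₂, fun x => ?_⟩
    have hD : (∑ α : A, p₁ (α :: x) * p₂ (α :: x)) ≠ 0 := (sum2_pos p₁ p₂ h₁ h₂ x).ne'
    simp only [oplus]
    rw [← Finset.mul_sum, ← Finset.sum_div, div_self hD, mul_one]
  · -- commutativity
    rintro p₁ p₂ ⟨-, h₁, -⟩ ⟨-, h₂, -⟩
    funext x
    induction x with
    | nil => simp [oplus]
    | cons τ x ih =>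
      simp only [oplus, ih]
      congr 2
      · ring
      · exact Finset.sum_congr rfl fun α _ => mul_comm _ _
  · -- associativity
    rintro p₁ p₂ p₃ ⟨-, h₁, -⟩ ⟨-, h₂, -⟩ ⟨-, h₃, -⟩
    rw [oplus_oplus_left p₁ p₂ p₃ h₁ h₂ h₃, oplus_oplus_right p₁ p₂ p₃ h₁ h₂ h₃]
  · -- identity is in 𝒫⁺
    refine ⟨by simp [iO], fun x => pow_pos (inv_pos.mpr hcard) _, fun x => ?_⟩
    simp only [iO, List.length_cons, pow_succ, Finset.sum_const, Finset.card_univ,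
      nsmul_eq_mul]
    rw [mul_comm, mul_assoc, inv_mul_cancel₀ hcard.ne', mul_one]
  · -- identity laws
    rintro p hp
    obtain ⟨hp0, hpos, hsum⟩ := hp
    have key : oplus p (iO A) = p := by
      funext x
      induction x with
      | nil => simp [oplus, hp0]
      | cons τ x ih =>
        have : (∑ α : A, p (α :: x) * iO A (α :: x))
            = p x * iO A (τ :: x) := by
          rw [← hsum x, Finset.sum_mul]
          exact Finset.sum_congr rfl fun α _ => rfl
        simp only [oplus, ih, this]
        have h1 : p x ≠ 0 := (hpos x).ne'
        have h2 : iO A (τ :: x) ≠ 0 := (pow_pos (inv_pos.mpr hcard) _).ne'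
        field_simp
    refine ⟨key, ?_⟩
    funext x
    induction x with
    | nil => simp [oplus, hp0]
    | cons τ x ih =>
      have : (∑ α : A, iO A (α :: x) * p (α :: x))
          = iO A (τ :: x) * p x := by
        rw [← hsum x, Finset.mul_sum]
        exact Finset.sum_congr rfl fun α _ => rfl
      simp only [oplus, ih, this]
      have h1 : p x ≠ 0 := (hpos x).ne'
      have h2 : iO A (τ :: x) ≠ 0 := (pow_pos (inv_pos.mpr hcard) _).ne'
      field_simp
  · -- inverses
    rintro p ⟨hp0, hpos, hsum⟩
    have hneg : ∀ x, 0 < oneg p x := by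
      intro x
      induction x with
      | nil => simp [oneg]
      | cons τ x ih =>
        refine mul_pos ih (div_pos (inv_pos.mpr (hpos _)) ?_)
        exact Finset.sum_pos (fun α _ => inv_pos.mpr (hpos _)) univ_nonempty
    have hSpos : ∀ x : List A, (0 : ℝ) < ∑ α : A, (p (α :: x))⁻¹ :=
      fun x => Finset.sum_pos (fun α _ => inv_pos.mpr (hpos _)) univ_nonempty
    refine ⟨⟨rfl, hneg, fun x => ?_⟩, ?_⟩
    · simp only [oneg]
      rw [← Finset.mul_sum, ← Finset.sum_div, div_self (hSpos x).ne', mul_one]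
    · funext x
      induction x with
      | nil => simp [oplus, iO]
      | cons τ x ih =>
        have hS := hSpos x
        set t : ℝ := oneg p x / (∑ α : A, (p (α :: x))⁻¹) with ht
        have htpos : 0 < t := div_pos (hneg x) hS
        have hterm : ∀ α : A, p (α :: x) * oneg p (α :: x) = t := by
          intro α
          simp only [oneg, ht]
          have hp := (hpos (α :: x)).ne'
          field_simp
        have hsum2 : (∑ α : A, p (α :: x) * oneg p (α :: x)) = (Fintype.card A : ℝ) * t := by
          rw [Finset.sum_congr rfl fun α _ => hterm α]
          simp [Finset.card_univ, mul_comm]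
        show oplus p (oneg p) x *
            (p (τ :: x) * oneg p (τ :: x) / ∑ α : A, p (α :: x) * oneg p (α :: x))
            = iO A (τ :: x)
        rw [hterm τ, hsum2, ih]
        simp only [iO, List.length_cons, pow_succ]
        congr 1
        rw [ht]
        have h2 : oneg p x ≠ 0 := (hneg x).ne'
        field_simp
        have hS1 : (0:ℝ) < ∑ x_1 : A, 1 / p (x_1 :: x) :=
          Finset.sum_pos (fun α _ => one_div_pos.mpr (hpos _)) univ_nonempty
        exact div_self hS1.ne'
end

section
/- Upper bound for pseudo-copy differences: for row-stochastic matrices Π₁, Π₂ and γ ∈ (0,1), with P_γ(Π) = γ[I−(1−γ)Π]^{-1}Π, the difference Δ' = P_γ(Π₁) − P_γ(Π₂) satisfies ‖Δ'‖_∞ ≤ (1/γ)·‖Π₁ − Π₂‖_∞, where ‖·‖_∞ is the maximum-absolute-row-sum operator norm. -/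
open Finset Matrix

/-- Maximum-absolute-row-sum operator norm of a matrix. -/
noncomputable def rowNorm {n : ℕ} (M : Matrix (Fin n) (Fin n) ℝ) : ℝ :=
  ⨆ i : Fin n, ∑ j, |M i j|

/-- The pseudo-copy map `P_γ(M) = γ[I−(1−γ)M]⁻¹M`. -/
noncomputable def pseudoCopy {n : ℕ} (γ : ℝ) (M : Matrix (Fin n) (Fin n) ℝ) :
    Matrix (Fin n) (Fin n) ℝ :=
  γ • ((1 - (1 - γ) • M)⁻¹ * M)

section Aux

attribute [local instance] Matrix.linftyOpNormedAddCommGroup Matrix.linftyOpNormedSpace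
  Matrix.linftyOpNormedRing Matrix.linftyOpNormedAlgebra

variable {n : ℕ}

lemma rowNorm_nonneg (M : Matrix (Fin n) (Fin n) ℝ) : 0 ≤ rowNorm M := by
  refine Real.iSup_nonneg fun i => ?_
  positivity

lemma rowNorm_le_norm (M : Matrix (Fin n) (Fin n) ℝ) : rowNorm M ≤ ‖M‖ := by
  refine Real.iSup_le (fun i => ?_) (norm_nonneg _)
  rw [Matrix.linfty_opNorm_def]
  have : (∑ j, ‖M i j‖₊ : NNReal) ≤ (Finset.univ : Finset (Fin n)).sup
      fun i => ∑ j, ‖M i j‖₊ :=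
    Finset.le_sup (f := fun i => ∑ j, ‖M i j‖₊) (Finset.mem_univ i)
  calc ∑ j, |M i j| = ((∑ j, ‖M i j‖₊ : NNReal) : ℝ) := by
        push_cast; simp [Real.norm_eq_abs]
    _ ≤ _ := by exact_mod_cast this

lemma norm_le_rowNorm (M : Matrix (Fin n) (Fin n) ℝ) : ‖M‖ ≤ rowNorm M := by
  rw [Matrix.linfty_opNorm_def]
  have h : ∀ i ∈ (Finset.univ : Finset (Fin n)),
      (∑ j, ‖M i j‖₊ : NNReal) ≤ ⟨rowNorm M, rowNorm_nonneg M⟩ := by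
    intro i _
    apply NNReal.coe_le_coe.mp
    push_cast
    have : ∑ j, ‖M i j‖ ≤ rowNorm M := by
      refine le_ciSup_of_le (Set.Finite.bddAbove (Set.finite_range _)) i ?_
      simp [Real.norm_eq_abs]
    exact (by simpa using this : ∑ j, |M i j| ≤ rowNorm M)
  calc ((Finset.univ.sup fun i => ∑ j, ‖M i j‖₊ : NNReal) : ℝ)
      ≤ ((⟨rowNorm M, rowNorm_nonneg M⟩ : NNReal) : ℝ) := NNReal.coe_le_coe.mpr (Finset.sup_le h)
    _ = rowNorm M := rfl

lemma stoch_norm_le_one (M : Matrix (Fin n) (Fin n) ℝ)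
    (hpos : ∀ i j, 0 ≤ M i j) (hrow : ∀ i, ∑ j, M i j = 1) : ‖M‖ ≤ 1 := by
  rw [Matrix.linfty_opNorm_def]
  rw [show (1 : ℝ) = ((1 : NNReal) : ℝ) by norm_num, NNReal.coe_le_coe]
  refine Finset.sup_le fun i _ => ?_
  rw [← NNReal.coe_le_coe]
  push_cast
  calc ∑ j, ‖M i j‖ = ∑ j, M i j := by
        refine Finset.sum_congr rfl fun j _ => ?_
        rw [Real.norm_eq_abs, abs_of_nonneg (hpos i j)]
    _ = 1 := hrow i
    _ ≤ 1 := le_refl 1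

lemma resolvent_det_isUnit (M : Matrix (Fin n) (Fin n) ℝ)
    (hpos : ∀ i j, 0 ≤ M i j) (hrow : ∀ i, ∑ j, M i j = 1)
    {γ : ℝ} (hγ0 : 0 < γ) (hγ1 : γ < 1) :
    IsUnit (1 - (1 - γ) • M).det := by
  rw [isUnit_iff_ne_zero]
  apply det_ne_zero_of_sum_row_lt_diag
  intro k
  have hdiag : M k k ≤ 1 := by
    rw [← hrow k]
    exact Finset.single_le_sum (fun j _ => hpos k j) (Finset.mem_univ k)
  have h1 : (1 - (1 - γ) • M) k k = 1 - (1 - γ) * M k k := by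
    simp [Matrix.sub_apply, Matrix.one_apply, Matrix.smul_apply]
  have h2 : ∀ j ∈ Finset.univ.erase k, ‖(1 - (1 - γ) • M) k j‖ = (1 - γ) * M k j := by
    intro j hj
    have hjk : j ≠ k := (Finset.mem_erase.mp hj).1
    have : (1 - (1 - γ) • M) k j = -((1 - γ) * M k j) := by
      simp [Matrix.sub_apply, Matrix.one_apply, Matrix.smul_apply, hjk.symm]
    rw [this, norm_neg, Real.norm_eq_abs, abs_of_nonneg]
    exact mul_nonneg (by linarith) (hpos k j)
  rw [Finset.sum_congr rfl h2, h1]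
  have hsum : ∑ j ∈ Finset.univ.erase k, M k j = 1 - M k k := by
    rw [Finset.sum_erase_eq_sub (Finset.mem_univ k), hrow k]
  have hMk : 0 ≤ M k k := hpos k k
  rw [← Finset.mul_sum, hsum, Real.norm_eq_abs, abs_of_nonneg (by nlinarith)]
  nlinarith

lemma resolvent_inv_norm_le (M : Matrix (Fin n) (Fin n) ℝ) [Nonempty (Fin n)]
    (hpos : ∀ i j, 0 ≤ M i j) (hrow : ∀ i, ∑ j, M i j = 1)
    {γ : ℝ} (hγ0 : 0 < γ) (hγ1 : γ < 1) :
    ‖(1 - (1 - γ) • M)⁻¹‖ ≤ 1 / γ := by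
  set A := 1 - (1 - γ) • M with hA
  have hdet := resolvent_det_isUnit M hpos hrow hγ0 hγ1
  have hAA : A * A⁻¹ = 1 := Matrix.mul_nonsing_inv A hdet
  have hkey : A⁻¹ = 1 + (1 - γ) • (M * A⁻¹) := by
    have hexp : A * A⁻¹ = A⁻¹ - (1 - γ) • (M * A⁻¹) := by
      rw [hA, sub_mul, one_mul, Matrix.smul_mul]
    rw [hexp] at hAA
    exact (sub_eq_iff_eq_add.mp hAA).trans (by abel)
  have hnorm : ‖A⁻¹‖ ≤ 1 + (1 - γ) * ‖A⁻¹‖ := by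
    calc ‖A⁻¹‖ = ‖(1 : Matrix (Fin n) (Fin n) ℝ) + (1 - γ) • (M * A⁻¹)‖ := by rw [← hkey]
      _ ≤ ‖(1 : Matrix (Fin n) (Fin n) ℝ)‖ + ‖(1 - γ) • (M * A⁻¹)‖ := norm_add_le _ _
      _ = 1 + |1 - γ| * ‖M * A⁻¹‖ := by rw [norm_one, norm_smul, Real.norm_eq_abs]
      _ ≤ 1 + (1 - γ) * (‖M‖ * ‖A⁻¹‖) := by
          rw [abs_of_nonneg (by linarith : (0:ℝ) ≤ 1 - γ)]
          have := norm_mul_le M A⁻¹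
          nlinarith [norm_nonneg (M * A⁻¹)]
      _ ≤ 1 + (1 - γ) * (1 * ‖A⁻¹‖) := by
          gcongr
          · exact stoch_norm_le_one M hpos hrow
      _ = 1 + (1 - γ) * ‖A⁻¹‖ := by ring
  rw [le_div_iff₀ hγ0]
  nlinarith [norm_nonneg A⁻¹]

lemma diff_identity (M₁ M₂ : Matrix (Fin n) (Fin n) ℝ)
    (hpos₁ : ∀ i j, 0 ≤ M₁ i j) (hrow₁ : ∀ i, ∑ j, M₁ i j = 1)
    (hpos₂ : ∀ i j, 0 ≤ M₂ i j) (hrow₂ : ∀ i, ∑ j, M₂ i j = 1)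
    {γ : ℝ} (hγ0 : 0 < γ) (hγ1 : γ < 1) :
    pseudoCopy γ M₁ - pseudoCopy γ M₂ =
      γ • ((1 - (1 - γ) • M₁)⁻¹ * (M₁ - M₂) * (1 - (1 - γ) • M₂)⁻¹) := by
  set A₁ := 1 - (1 - γ) • M₁ with hA₁
  set A₂ := 1 - (1 - γ) • M₂ with hA₂
  have hdet₁ := resolvent_det_isUnit M₁ hpos₁ hrow₁ hγ0 hγ1
  have hdet₂ := resolvent_det_isUnit M₂ hpos₂ hrow₂ hγ0 hγ1
  have hcomm : M₂ * A₂ = A₂ * M₂ := by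
    rw [hA₂, mul_sub, sub_mul, mul_one, one_mul, Matrix.mul_smul, Matrix.smul_mul]
  have hcomm' : A₂⁻¹ * M₂ = M₂ * A₂⁻¹ := by
    calc A₂⁻¹ * M₂ = A₂⁻¹ * M₂ * (A₂ * A₂⁻¹) := by
          rw [Matrix.mul_nonsing_inv A₂ hdet₂, mul_one]
      _ = A₂⁻¹ * (M₂ * A₂) * A₂⁻¹ := by noncomm_ring
      _ = A₂⁻¹ * (A₂ * M₂) * A₂⁻¹ := by rw [hcomm]
      _ = (A₂⁻¹ * A₂) * (M₂ * A₂⁻¹) := by noncomm_ring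
      _ = M₂ * A₂⁻¹ := by rw [Matrix.nonsing_inv_mul A₂ hdet₂, one_mul]
  have hmid : M₁ * A₂ - A₁ * M₂ = M₁ - M₂ := by
    rw [hA₁, hA₂, mul_sub, sub_mul, mul_one, one_mul, Matrix.mul_smul, Matrix.smul_mul]
    abel
  have key : A₁⁻¹ * M₁ - A₂⁻¹ * M₂ = A₁⁻¹ * (M₁ - M₂) * A₂⁻¹ := by
    calc A₁⁻¹ * M₁ - A₂⁻¹ * M₂
        = A₁⁻¹ * (M₁ * A₂) * A₂⁻¹ - A₁⁻¹ * (A₁ * M₂) * A₂⁻¹ := by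
          rw [show A₁⁻¹ * (M₁ * A₂) * A₂⁻¹ = A₁⁻¹ * M₁ * (A₂ * A₂⁻¹) by noncomm_ring,
            Matrix.mul_nonsing_inv A₂ hdet₂, mul_one,
            show A₁⁻¹ * (A₁ * M₂) * A₂⁻¹ = (A₁⁻¹ * A₁) * (M₂ * A₂⁻¹) by noncomm_ring,
            Matrix.nonsing_inv_mul A₁ hdet₁, one_mul, ← hcomm']
      _ = A₁⁻¹ * (M₁ * A₂ - A₁ * M₂) * A₂⁻¹ := by noncomm_ring
      _ = A₁⁻¹ * (M₁ - M₂) * A₂⁻¹ := by rw [hmid]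
  rw [pseudoCopy, pseudoCopy, ← hA₁, ← hA₂, ← smul_sub, key]

lemma pseudo_copy_diff_upper_aux (M₁ M₂ : Matrix (Fin n) (Fin n) ℝ)
    (hpos₁ : ∀ i j, 0 ≤ M₁ i j) (hrow₁ : ∀ i, ∑ j, M₁ i j = 1)
    (hpos₂ : ∀ i j, 0 ≤ M₂ i j) (hrow₂ : ∀ i, ∑ j, M₂ i j = 1)
    (γ : ℝ) (hγ0 : 0 < γ) (hγ1 : γ < 1) :
    rowNorm (pseudoCopy γ M₁ - pseudoCopy γ M₂) ≤ (1 / γ) * rowNorm (M₁ - M₂) := by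
  rcases isEmpty_or_nonempty (Fin n) with h | h
  · have h1 : rowNorm (pseudoCopy γ M₁ - pseudoCopy γ M₂) = 0 := by
      simp [rowNorm, Real.iSup_of_isEmpty]
    have h2 : rowNorm (M₁ - M₂) = 0 := by simp [rowNorm, Real.iSup_of_isEmpty]
    rw [h1, h2, mul_zero]
  · set A₁ := 1 - (1 - γ) • M₁ with hA₁
    set A₂ := 1 - (1 - γ) • M₂ with hA₂
    have hid := diff_identity M₁ M₂ hpos₁ hrow₁ hpos₂ hrow₂ hγ0 hγ1
    have hinv₁ := resolvent_inv_norm_le M₁ hpos₁ hrow₁ hγ0 hγ1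
    have hinv₂ := resolvent_inv_norm_le M₂ hpos₂ hrow₂ hγ0 hγ1
    calc rowNorm (pseudoCopy γ M₁ - pseudoCopy γ M₂)
        ≤ ‖pseudoCopy γ M₁ - pseudoCopy γ M₂‖ := rowNorm_le_norm _
      _ = ‖γ • (A₁⁻¹ * (M₁ - M₂) * A₂⁻¹)‖ := by rw [hid]
      _ = γ * ‖A₁⁻¹ * (M₁ - M₂) * A₂⁻¹‖ := by
          rw [norm_smul, Real.norm_eq_abs, abs_of_pos hγ0]
      _ ≤ γ * (‖A₁⁻¹ * (M₁ - M₂)‖ * ‖A₂⁻¹‖) := by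
          gcongr
          exact norm_mul_le _ _
      _ ≤ γ * (‖A₁⁻¹‖ * ‖M₁ - M₂‖ * ‖A₂⁻¹‖) := by
          gcongr
          exact norm_mul_le _ _
      _ ≤ γ * ((1 / γ) * ‖M₁ - M₂‖ * (1 / γ)) := by
          gcongr
      _ = (1 / γ) * ‖M₁ - M₂‖ := by field_simp
      _ ≤ (1 / γ) * rowNorm (M₁ - M₂) := by
          have h1 := norm_le_rowNorm (M₁ - M₂)
          have h2 : (0:ℝ) ≤ 1 / γ := by positivity
          nlinarith

end Aux

/-- upper bound for pseudo-copy differences: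
`‖P_γ(Π₁) − P_γ(Π₂)‖_∞ ≤ (1/γ)·‖Π₁ − Π₂‖_∞`. -/
theorem pseudo_copy_diff_upper {n : ℕ} (M₁ M₂ : Matrix (Fin n) (Fin n) ℝ)
    (hpos₁ : ∀ i j, 0 ≤ M₁ i j) (hrow₁ : ∀ i, ∑ j, M₁ i j = 1)
    (hpos₂ : ∀ i j, 0 ≤ M₂ i j) (hrow₂ : ∀ i, ∑ j, M₂ i j = 1)
    (γ : ℝ) (hγ0 : 0 < γ) (hγ1 : γ < 1) :
    rowNorm (pseudoCopy γ M₁ - pseudoCopy γ M₂) ≤ (1 / γ) * rowNorm (M₁ - M₂) :=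
  pseudo_copy_diff_upper_aux M₁ M₂ hpos₁ hrow₁ hpos₂ hrow₂ γ hγ0 hγ1
end

section
/- The morph-matrix sum operation is an Abelian group on positive row-stochastic matrices of fixed shape: the operation (Π̃₁ ⊞ Π̃₂)(q,σ) = Π̃₁(q,σ)Π̃₂(q,σ)/Σ_α Π̃₁(q,α)Π̃₂(q,α) is commutative and associative, has identity the uniform matrix W(q,σ) = 1/|Σ|, and each Π̃ has inverse (−Π̃)(q,σ) = Π̃(q,σ)^{-1}/Σ_α Π̃(q,α)^{-1}. -/
open Finset

/-- A morph matrix: strictly positive entries in `(0,1]`, each row summing to 1. -/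
def GoodMorph {Q A : Type*} [Fintype A] (P : Q → A → ℝ) : Prop :=
  (∀ q σ, 0 < P q σ) ∧ (∀ q σ, P q σ ≤ 1) ∧ (∀ q, ∑ σ : A, P q σ = 1)

/-- The morph-matrix sum `(Π̃₁ ⊞ Π̃₂)(q,σ) = Π̃₁(q,σ)Π̃₂(q,σ)/∑_α Π̃₁(q,α)Π̃₂(q,α)`. -/
noncomputable def mop {Q A : Type*} [Fintype A] (P₁ P₂ : Q → A → ℝ) : Q → A → ℝ :=
  fun q σ => P₁ q σ * P₂ q σ / ∑ α : A, P₁ q α * P₂ q α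

/-- The morph-matrix inverse `(−Π̃)(q,σ) = Π̃(q,σ)⁻¹/∑_α Π̃(q,α)⁻¹`. -/
noncomputable def mneg {Q A : Type*} [Fintype A] (P : Q → A → ℝ) : Q → A → ℝ :=
  fun q σ => (P q σ)⁻¹ / ∑ α : A, (P q α)⁻¹

/-- The uniform (flat white noise) morph matrix `W(q,σ) = 1/|Σ|`. -/
noncomputable def mW (Q A : Type*) [Fintype A] : Q → A → ℝ :=
  fun _ _ => (Fintype.card A : ℝ)⁻¹

section Aux

variable {Q A : Type*} [Fintype A] [Nonempty A]

lemma aux_sum_pos {f : A → ℝ} (hf : ∀ a, 0 < f a) : 0 < ∑ a : A, f a :=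
  Finset.sum_pos (fun a _ => hf a) Finset.univ_nonempty

/-- Normalization of a positive function is a good row. -/
lemma aux_good_norm (f : Q → A → ℝ) (hf : ∀ q a, 0 < f q a) :
    GoodMorph (fun q a => f q a / ∑ α : A, f q α) := by
  refine ⟨fun q σ => div_pos (hf q σ) (aux_sum_pos (hf q)), fun q σ => ?_, fun q => ?_⟩
  · rw [div_le_one (aux_sum_pos (hf q))]
    exact Finset.single_le_sum (fun a _ => (hf q a).le) (Finset.mem_univ σ)
  · rw [← Finset.sum_div, div_self (aux_sum_pos (hf q)).ne']

lemma aux_mop_div_left (P P' : Q → A → ℝ) (s : Q → ℝ) (hs : ∀ q, s q ≠ 0) :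
    mop (fun q σ => P q σ / s q) P' = mop P P' := by
  funext q σ
  simp only [mop, div_mul_eq_mul_div, ← Finset.sum_div]
  exact div_div_div_cancel_right₀ (hs q) _ _

lemma aux_mop_comm (P₁ P₂ : Q → A → ℝ) : mop P₁ P₂ = mop P₂ P₁ := by
  funext q σ
  simp only [mop, mul_comm]

end Aux

/-- `⊞` is an Abelian group operation on positive row-stochastic
morph matrices of fixed shape: closure, commutativity, associativity,
identity `W`, and inverses `−Π̃`. -/
theorem morph_abelian_group {Q A : Type*} [Fintype A] [Nonempty A] :
    (∀ P₁ P₂ : Q → A → ℝ, GoodMorph P₁ → GoodMorph P₂ → GoodMorph (mop P₁ P₂)) ∧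
    (∀ P₁ P₂ : Q → A → ℝ, GoodMorph P₁ → GoodMorph P₂ → mop P₁ P₂ = mop P₂ P₁) ∧
    (∀ P₁ P₂ P₃ : Q → A → ℝ, GoodMorph P₁ → GoodMorph P₂ → GoodMorph P₃ →
      mop (mop P₁ P₂) P₃ = mop P₁ (mop P₂ P₃)) ∧
    GoodMorph (mW Q A) ∧
    (∀ P : Q → A → ℝ, GoodMorph P → mop P (mW Q A) = P ∧ mop (mW Q A) P = P) ∧
    (∀ P : Q → A → ℝ, GoodMorph P → GoodMorph (mneg P) ∧ mop P (mneg P) = mW Q A) := by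
  have cardpos : (0:ℝ) < (Fintype.card A : ℝ) := by
    exact_mod_cast Fintype.card_pos
  have closure : ∀ P₁ P₂ : Q → A → ℝ, GoodMorph P₁ → GoodMorph P₂ → GoodMorph (mop P₁ P₂) := by
    intro P₁ P₂ h₁ h₂
    exact aux_good_norm _ (fun q a => mul_pos (h₁.1 q a) (h₂.1 q a))
  have idright : ∀ P : Q → A → ℝ, GoodMorph P → mop P (mW Q A) = P := by
    intro P hP
    funext q σ
    have : ∑ α : A, P q α * (Fintype.card A : ℝ)⁻¹ = (Fintype.card A : ℝ)⁻¹ := by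
      rw [← Finset.sum_mul, hP.2.2 q, one_mul]
    simp only [mop, mW, this]
    rw [mul_div_assoc, div_self (inv_ne_zero cardpos.ne'), mul_one]
  refine ⟨closure, fun P₁ P₂ _ _ => aux_mop_comm P₁ P₂, ?_, ?_, ?_, ?_⟩
  · -- associativity
    intro P₁ P₂ P₃ h₁ h₂ h₃
    have key : ∀ (R S T : Q → A → ℝ), GoodMorph R → GoodMorph S →
        mop (mop R S) T = mop (fun q σ => R q σ * S q σ) T := by
      intro R S T hR hS
      have := aux_mop_div_left (fun q σ => R q σ * S q σ) T
        (fun q => ∑ α : A, R q α * S q α)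
        (fun q => (aux_sum_pos (fun a => mul_pos (hR.1 q a) (hS.1 q a))).ne')
      exact this
    rw [key P₁ P₂ P₃ h₁ h₂, aux_mop_comm P₁ (mop P₂ P₃), aux_mop_comm P₂ P₃,
      key P₃ P₂ P₁ h₃ h₂]
    have hsum : ∀ q, ∑ x : A, P₃ q x * P₂ q x * P₁ q x = ∑ x : A, P₁ q x * P₂ q x * P₃ q x :=
      fun q => Finset.sum_congr rfl (fun x _ => by ring)
    funext q σ
    simp only [mop, hsum]
    ring
  · -- W is good
    refine ⟨fun q σ => inv_pos.2 cardpos, fun q σ => ?_, fun q => ?_⟩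
    · rw [mW, inv_le_one_iff₀]
      right; exact_mod_cast Fintype.card_pos
    · simp [mW, Finset.card_univ, mul_inv_cancel₀ cardpos.ne']
  · -- identity
    intro P hP
    exact ⟨idright P hP, by rw [aux_mop_comm]; exact idright P hP⟩
  · -- inverse
    intro P hP
    refine ⟨aux_good_norm _ (fun q a => inv_pos.2 (hP.1 q a)), ?_⟩
    funext q σ
    have hS : (0:ℝ) < ∑ α : A, (P q α)⁻¹ := aux_sum_pos (fun a => inv_pos.2 (hP.1 q a))
    have h1 : ∀ α, P q α * ((P q α)⁻¹ / ∑ β : A, (P q β)⁻¹) = (∑ β : A, (P q β)⁻¹)⁻¹ := by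
      intro α
      rw [mul_div_assoc', mul_inv_cancel₀ (hP.1 q α).ne', one_div]
    simp only [mop, mneg, mW, h1]
    rw [Finset.sum_const, Finset.card_univ, nsmul_eq_mul, mul_comm, ← div_div,
      div_self (inv_ne_zero hS.ne'), one_div]
end
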